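/- arXiv:1102.2009 — 3 statements merged into one kernel-verified Lean document; each statement's English description precedes it below -/
import Mathlib

section
/- Under the hypotheses E₀ > 0, q₀ > 0, r₀ > 0, E₀ = ρ₀²/2 + q₀/r₀², the reparametrized time σ(t) = √(2q₀)·τ(t) with τ(t) = ∫₀ᵗ (2E₀s² + 2r₀ρ₀s + r₀²)^{-1} ds satisfies lim_{t→±∞} σ(t) = ±π/2 − arctan(r₀ρ₀/√(2q₀)); in particular σ(+∞) − σ(−∞) = π. -/
open Filter Real intervalIntegral
open scoped Topology

/-! Completing the square, `a (a s² + 2 b s + c) = (a s + b)² + k²` with `k² = a c − b²`, shows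
that `k⁻¹ arctan ((a s + b) / k)` is an antiderivative of `(a s² + 2 b s + c)⁻¹`. For the
trajectory, the energy relation gives `k² = 2E₀ r₀² − r₀² ρ₀² = 2 q₀`, so `σ(t)` is the
increment of `arctan ((2 E₀ t + r₀ ρ₀) / √(2q₀))` from `0` to `t`, and the argument of the
arctangent sweeps all of `ℝ`. -/

section QuadraticArctan

variable {a b c k : ℝ}

theorem mul_quadratic_eq_sq_add_sq (hk : k ^ 2 = a * c - b ^ 2) (t : ℝ) :
    a * (a * t ^ 2 + 2 * b * t + c) = (a * t + b) ^ 2 + k ^ 2 := by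
  rw [hk]; ring

theorem quadratic_ne_zero (hk : k ^ 2 = a * c - b ^ 2) (hk0 : k ≠ 0) (t : ℝ) :
    a * t ^ 2 + 2 * b * t + c ≠ 0 := by
  have hpos : 0 < a * (a * t ^ 2 + 2 * b * t + c) := by
    rw [mul_quadratic_eq_sq_add_sq hk]; positivity
  exact right_ne_zero_of_mul hpos.ne'

theorem hasDerivAt_arctan_affine_div (hk : k ^ 2 = a * c - b ^ 2) (hk0 : k ≠ 0) (t : ℝ) :
    HasDerivAt (fun s => arctan ((a * s + b) / k)) (k * (a * t ^ 2 + 2 * b * t + c)⁻¹) t := by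
  have hQ := quadratic_ne_zero hk hk0 t
  have ha : a ≠ 0 := by
    rintro rfl
    exact hk0 (pow_eq_zero_iff two_ne_zero |>.mp (by nlinarith [sq_nonneg b, sq_nonneg k]))
  have hlin : HasDerivAt (fun s => (a * s + b) / k) (a / k) t := by
    simpa using (((hasDerivAt_id t).const_mul a).add_const b).div_const k
  refine ((hasDerivAt_arctan _).comp t hlin).congr_deriv ?_
  have hden : 1 + ((a * t + b) / k) ^ 2 = a * (a * t ^ 2 + 2 * b * t + c) / k ^ 2 := by
    rw [mul_quadratic_eq_sq_add_sq hk]; field_simp; ring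
  rw [hden]
  field_simp

theorem mul_integral_inv_quadratic (hk : k ^ 2 = a * c - b ^ 2) (hk0 : k ≠ 0) (x y : ℝ) :
    k * ∫ s in x..y, (a * s ^ 2 + 2 * b * s + c)⁻¹ =
      arctan ((a * y + b) / k) - arctan ((a * x + b) / k) := by
  have hcont : Continuous fun s => k * (a * s ^ 2 + 2 * b * s + c)⁻¹ :=
    continuous_const.mul ((by fun_prop : Continuous fun s => a * s ^ 2 + 2 * b * s + c).inv₀
      (quadratic_ne_zero hk hk0))
  rw [← integral_const_mul]
  exact integral_eq_sub_of_hasDerivAt (fun s _ => hasDerivAt_arctan_affine_div hk hk0 s)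
    (hcont.intervalIntegrable x y)

theorem tendsto_arctan_affine_div_atTop (ha : 0 < a) (hk : 0 < k) :
    Tendsto (fun t => arctan ((a * t + b) / k)) atTop (𝓝 (π / 2)) :=
  (tendsto_arctan_atTop.mono_right nhdsWithin_le_nhds).comp <|
    (tendsto_atTop_add_const_right _ b (tendsto_id.const_mul_atTop ha)).atTop_div_const hk

theorem tendsto_arctan_affine_div_atBot (ha : 0 < a) (hk : 0 < k) :
    Tendsto (fun t => arctan ((a * t + b) / k)) atBot (𝓝 (-(π / 2))) :=
  (tendsto_arctan_atBot.mono_right nhdsWithin_le_nhds).comp <|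
    (tendsto_atBot_add_const_right _ b (tendsto_id.const_mul_atBot ha)).atBot_div_const hk

end QuadraticArctan

/-- The reparametrized time `σ(t) = √(2q₀) τ(t)`, with
`τ(t) = ∫₀ᵗ (2E₀s² + 2r₀ρ₀s + r₀²)⁻¹ ds`, satisfies
`σ(t) → ±π/2 − arctan(r₀ρ₀/√(2q₀))` as `t → ±∞`; in particular
`σ(+∞) − σ(−∞) = π`. -/
theorem total_boundary_geodesic_time
    (E₀ q₀ r₀ ρ₀ : ℝ) (hE : 0 < E₀) (hq : 0 < q₀) (hr₀ : 0 < r₀)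
    (henergy : E₀ = ρ₀ ^ 2 / 2 + q₀ / r₀ ^ 2)
    (σ : ℝ → ℝ)
    (hσ : σ = fun t => Real.sqrt (2 * q₀) *
      ∫ s in (0:ℝ)..t, (2 * E₀ * s ^ 2 + 2 * r₀ * ρ₀ * s + r₀ ^ 2)⁻¹) :
    Tendsto σ atTop (𝓝 (π / 2 - Real.arctan (r₀ * ρ₀ / Real.sqrt (2 * q₀)))) ∧
    Tendsto σ atBot (𝓝 (-(π / 2) - Real.arctan (r₀ * ρ₀ / Real.sqrt (2 * q₀)))) ∧
    (π / 2 - Real.arctan (r₀ * ρ₀ / Real.sqrt (2 * q₀)))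
      - (-(π / 2) - Real.arctan (r₀ * ρ₀ / Real.sqrt (2 * q₀))) = π := by
  have hk0 : 0 < √(2 * q₀) := by positivity
  have hk : √(2 * q₀) ^ 2 = 2 * E₀ * r₀ ^ 2 - (r₀ * ρ₀) ^ 2 := by
    rw [sq_sqrt (by positivity), henergy]
    field_simp
    ring
  have hσ' : σ = fun t =>
      arctan ((2 * E₀ * t + r₀ * ρ₀) / √(2 * q₀)) - arctan (r₀ * ρ₀ / √(2 * q₀)) := by
    funext t
    simpa [hσ, mul_assoc] using mul_integral_inv_quadratic hk hk0.ne' 0 t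
  have h2E : 0 < 2 * E₀ := by positivity
  rw [hσ']
  exact ⟨(tendsto_arctan_affine_div_atTop h2E hk0).sub_const _,
    (tendsto_arctan_affine_div_atBot h2E hk0).sub_const _, by ring⟩
end

section
/- Suppose g : ℝ → ℝ is differentiable, nonnegative, g(0) = 0, and satisfies |g'(t)| ≤ C⟨t⟩^{-1-μ} g(t) + C h^μ ⟨t⟩^{-1-μ} for all t ∈ ℝ, where C, μ > 0, h ∈ (0,1], and ⟨t⟩ = √(1+t²). Then there exists a constant C' depending only on C and μ (not on h or t) such that g(t) ≤ C' h^μ for all t ∈ ℝ. -/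
/-!
On `[0, ∞)` the weight `⟨t⟩^{-1-μ}` is dominated by `2^{1+μ} (1+t)^{-1-μ}`, whose primitive
`-(1+t)^{-μ}/μ` increases by at most `1/μ`. With `K = 2^{1+μ} C`, the integrating factor
`exp(-K ∫ weight)` therefore makes `(g + h^μ) exp(-K ∫ weight)` nonincreasing, which gives `g + h^μ ≤ h^μ exp(K/μ)`.
Negative times reduce to positive ones through `t ↦ -t`.
-/

open Real Set

theorem le_mul_exp_sub_of_hasDerivAt_le_mul {u u' p P : ℝ → ℝ} {a : ℝ}
    (hu : ∀ t ∈ Ici a, HasDerivAt u (u' t) t) (hP : ∀ t ∈ Ici a, HasDerivAt P (p t) t)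
    (hbound : ∀ t ∈ Ioi a, u' t ≤ p t * u t) :
    ∀ t ∈ Ici a, u t ≤ u a * exp (P t - P a) := by
  have hF : ∀ t ∈ Ici a, HasDerivAt (fun s => u s * exp (-P s))
      ((u' t - p t * u t) * exp (-P t)) t := fun t ht =>
    ((hu t ht).mul (hP t ht).neg.exp).congr_deriv (by rw [Pi.neg_apply]; ring)
  have hanti : AntitoneOn (fun s => u s * exp (-P s)) (Ici a) := by
    refine antitoneOn_of_hasDerivWithinAt_nonpos (convex_Ici a)
      (fun t ht => (hF t ht).continuousAt.continuousWithinAt)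
      (fun t ht => (hF t (interior_subset ht)).hasDerivWithinAt) fun t ht => ?_
    rw [interior_Ici] at ht
    exact mul_nonpos_of_nonpos_of_nonneg (sub_nonpos.2 (hbound t ht)) (exp_pos _).le
  intro t ht
  have hdecay : u t * exp (-P t) ≤ u a * exp (-P a) := hanti self_mem_Ici ht ht
  calc u t = u t * exp (-P t) * exp (P t) := by rw [mul_assoc, ← exp_add]; simp
    _ ≤ u a * exp (-P a) * exp (P t) := by gcongr
    _ = u a * exp (P t - P a) := by rw [mul_assoc, ← exp_add]; ring_nf

theorem hasDerivAt_neg_one_add_rpow_neg_div {μ t : ℝ} (hμ : μ ≠ 0) (ht : 0 < 1 + t) :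
    HasDerivAt (fun s => -(1 + s) ^ (-μ) / μ) ((1 + t) ^ (-(1 + μ))) t := by
  refine ((((hasDerivAt_id' t).const_add 1).rpow_const (p := -μ) (Or.inl ht.ne')).neg.div_const
    μ).congr_deriv ?_
  rw [show -μ - 1 = -(1 + μ) by ring]
  field_simp

theorem rpow_neg_sqrt_one_add_sq_le {s t : ℝ} (hs : 0 ≤ s) (ht : 0 ≤ t) :
    sqrt (1 + t ^ 2) ^ (-s) ≤ 2 ^ s * (1 + t) ^ (-s) := by
  have hsqrt : (1 + t) / 2 ≤ sqrt (1 + t ^ 2) :=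
    le_sqrt_of_sq_le (by nlinarith)
  calc sqrt (1 + t ^ 2) ^ (-s) ≤ ((1 + t) / 2) ^ (-s) :=
        rpow_le_rpow_of_nonpos (by positivity) hsqrt (neg_nonpos.2 hs)
    _ = 2 ^ s * (1 + t) ^ (-s) := by
        rw [div_rpow (by positivity) zero_le_two, rpow_neg zero_le_two, rpow_neg (by positivity)]
        field_simp

theorem le_exp_mul_of_abs_deriv_le_of_nonneg {C μ M : ℝ} (hC : 0 ≤ C) (hμ : 0 < μ)
    (hM : 0 ≤ M) {g : ℝ → ℝ} (hg : Differentiable ℝ g) (hg_nonneg : ∀ t, 0 ≤ g t)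
    (hg0 : g 0 = 0)
    (hderiv : ∀ t, 0 ≤ t → |deriv g t| ≤ C * sqrt (1 + t ^ 2) ^ (-(1 + μ)) * (g t + M)) :
    ∀ t, 0 ≤ t → g t ≤ exp (2 ^ (1 + μ) * C / μ) * M := by
  set K := 2 ^ (1 + μ) * C
  have hK : 0 ≤ K := by positivity
  have hu : ∀ t ∈ Ici (0 : ℝ), HasDerivAt (fun s => g s + M) (deriv g t) t :=
    fun t _ => (hg t).hasDerivAt.add_const M
  have hP : ∀ t ∈ Ici (0 : ℝ), HasDerivAt (fun s => K * (-(1 + s) ^ (-μ) / μ))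
      (K * (1 + t) ^ (-(1 + μ))) t := fun t ht =>
    (hasDerivAt_neg_one_add_rpow_neg_div hμ.ne' (by linarith [mem_Ici.1 ht])).const_mul K
  have hbound : ∀ t ∈ Ioi (0 : ℝ), deriv g t ≤ K * (1 + t) ^ (-(1 + μ)) * (g t + M) := by
    intro t ht
    have ht : 0 ≤ t := ht.out.le
    calc deriv g t ≤ C * sqrt (1 + t ^ 2) ^ (-(1 + μ)) * (g t + M) :=
          (le_abs_self _).trans (hderiv t ht)
      _ ≤ C * (2 ^ (1 + μ) * (1 + t) ^ (-(1 + μ))) * (g t + M) := by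
          have := hg_nonneg t
          gcongr
          exact rpow_neg_sqrt_one_add_sq_le (by linarith) ht
      _ = K * (1 + t) ^ (-(1 + μ)) * (g t + M) := by ring
  intro t ht
  have hgronwall := le_mul_exp_sub_of_hasDerivAt_le_mul hu hP hbound t ht
  have hexp : K * (-(1 + t) ^ (-μ) / μ) - K * (-(1 + 0) ^ (-μ) / μ) ≤ K / μ := by
    rw [add_zero, one_rpow, show ∀ x : ℝ, K * (-x / μ) - K * (-1 / μ) = K / μ - K * x / μ by
      intro x; ring]
    exact sub_le_self _ (by positivity)
  simp only [hg0, zero_add] at hgronwall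
  calc g t ≤ g t + M := le_add_of_nonneg_right hM
    _ ≤ M * exp (K / μ) := hgronwall.trans (by gcongr)
    _ = exp (K / μ) * M := mul_comm _ _

/-- Gronwall-type estimate: if `g ≥ 0` is differentiable, `g(0) = 0` and
`|g'(t)| ≤ C⟨t⟩^{-1-μ} g(t) + C h^μ ⟨t⟩^{-1-μ}` with `⟨t⟩ = √(1+t²)`,
then `g(t) ≤ C' h^μ` for all `t`, with `C'` depending only on `C` and `μ`. -/
theorem gronwall_uniform_bound (C μ : ℝ) (hC : 0 < C) (hμ : 0 < μ) :
    ∃ C' : ℝ, 0 < C' ∧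
      ∀ h : ℝ, h ∈ Set.Ioc (0:ℝ) 1 →
        ∀ g : ℝ → ℝ, Differentiable ℝ g → (∀ t, 0 ≤ g t) → g 0 = 0 →
          (∀ t : ℝ, |deriv g t| ≤
            C * Real.sqrt (1 + t ^ 2) ^ (-(1 + μ)) * g t
              + C * h ^ μ * Real.sqrt (1 + t ^ 2) ^ (-(1 + μ))) →
          ∀ t : ℝ, g t ≤ C' * h ^ μ := by
  refine ⟨exp (2 ^ (1 + μ) * C / μ), exp_pos _, ?_⟩
  rintro h ⟨hh, -⟩ g hg hg_nonneg hg0 hderiv t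
  have hM : 0 ≤ h ^ μ := rpow_nonneg hh.le μ
  have hderiv' : ∀ t, |deriv g t| ≤ C * sqrt (1 + t ^ 2) ^ (-(1 + μ)) * (g t + h ^ μ) :=
    fun t => (hderiv t).trans_eq (by ring)
  rcases le_total 0 t with ht | ht
  · exact le_exp_mul_of_abs_deriv_le_of_nonneg hC.le hμ hM hg hg_nonneg hg0
      (fun t _ => hderiv' t) t ht
  · have hreflect := le_exp_mul_of_abs_deriv_le_of_nonneg hC.le hμ hM
      (g := fun s => g (-s)) (hg.comp differentiable_neg) (fun s => hg_nonneg (-s)) (by simpa using hg0)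
      (fun s _ => by simpa [deriv_comp_neg] using hderiv' (-s)) (-t) (neg_nonneg.2 ht)
    simpa using hreflect
end

section
/- Let r : [t₀,∞) → ℝ be twice differentiable with r(t₀) ≥ R > 0 and suppose (d²/dt²)(r(t)²) ≥ c > 0 whenever r(t) ≥ R, and (d/dt)(r(t)²)|_{t=t₀} ≥ 0. Then r(t)² ≥ R² + c(t−t₀)²/2 for all t ≥ t₀; in particular there exist c₁, c₂-type bounds c₁⟨t⟩ ≤ r(t) for t large. -/
/-!
Write `f = r²`. As long as `r ≥ R`, the convexity bound `f'' ≥ c` together with `f'(t₀) ≥ 0`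
keeps `f'` nonnegative, so `f` cannot decrease and `r` cannot drop below `R`: a first exit time
`τ` would have `f'(τ) ≥ 0` and `f''(τ) ≥ c > 0`, so `f` increases just after `τ`. Hence
`f'' ≥ c` on all of `[t₀, ∞)`, and integrating twice gives `f(t) ≥ R² + c (t - t₀)² / 2`, whose
square root grows like `⟨t⟩`.
-/

open Set Filter Topology

theorem add_deriv_mul_add_sq_le_of_le_deriv_deriv {f : ℝ → ℝ} {a b c : ℝ}
    (hf : Differentiable ℝ f) (hf' : Differentiable ℝ (deriv f))
    (hc : ∀ x ∈ Ioo a b, c ≤ deriv (deriv f) x) {x : ℝ} (hx : x ∈ Icc a b) :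
    f a + deriv f a * (x - a) + c * (x - a) ^ 2 / 2 ≤ f x := by
  have hab : a ∈ Icc a b := left_mem_Icc.2 (hx.1.trans hx.2)
  have hderiv : ∀ y ∈ Icc a b, deriv f a + c * (y - a) ≤ deriv f y := fun y hy => by
    have := (convex_Icc a b).mul_sub_le_image_sub_of_le_deriv hf'.continuous.continuousOn
      hf'.differentiableOn (by rwa [interior_Icc]) a hab y hy hy.1
    linarith
  set g := fun y => f y - deriv f a * (y - a) - c * (y - a) ^ 2 / 2
  have hg : ∀ y, HasDerivAt g (deriv f y - deriv f a - c * (y - a)) y := fun y => by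
    have hlin : HasDerivAt (fun y => y - a) 1 y := (hasDerivAt_id' y).sub_const a
    refine (((hf y).hasDerivAt.sub (hlin.const_mul (deriv f a))).sub
      (((hlin.pow 2).const_mul c).div_const 2)).congr_deriv ?_
    ring
  have hmono : MonotoneOn g (Icc a b) :=
    monotoneOn_of_hasDerivWithinAt_nonneg (convex_Icc a b)
      (fun y _ => (hg y).continuousAt.continuousWithinAt) (fun y _ => (hg y).hasDerivWithinAt)
      (fun y hy => by linarith [hderiv y (interior_subset hy)])
  have := hmono hab hx hx.1
  simp only [g, sub_self, mul_zero, sub_zero] at this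
  linarith

theorem le_of_le_deriv_deriv_sq {r : ℝ → ℝ} (hr : ContDiff ℝ 2 r) {t₀ R c : ℝ}
    (hR : 0 < R) (hc : 0 < c) (hinit : R ≤ r t₀)
    (hconv : ∀ t, t₀ ≤ t → R ≤ r t → c ≤ deriv (deriv (fun s => (r s) ^ 2)) t)
    (hder0 : 0 ≤ deriv (fun s => (r s) ^ 2) t₀) {t : ℝ} (ht : t₀ ≤ t) : R ≤ r t := by
  set f := fun s => r s ^ 2
  have hf : ContDiff ℝ 2 f := hr.pow 2
  have hf₁ : Differentiable ℝ f := hf.differentiable two_ne_zero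
  have hf₂ : Differentiable ℝ (deriv f) := hf.differentiable_deriv_two
  have hf₃ : Continuous (deriv (deriv f)) := (hf.deriv' (n := 1)).continuous_deriv le_rfl
  have hclosed : IsClosed ({t | R ≤ r t} ∩ Icc t₀ t) :=
    (isClosed_le continuous_const hr.continuous).inter isClosed_Icc
  refine hclosed.Icc_subset_of_forall_mem_nhdsGT_of_Icc_subset hinit (fun τ hτ hgood => ?_)
    ⟨ht, le_rfl⟩
  have hderτ : 0 ≤ deriv f τ := by
    have := (convex_Icc t₀ τ).mul_sub_le_image_sub_of_le_deriv hf₂.continuous.continuousOn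
      hf₂.differentiableOn (fun x hx => by
        rw [interior_Icc] at hx
        exact hconv x hx.1.le (hgood (Ioo_subset_Icc_self hx)))
      t₀ (left_mem_Icc.2 hτ.1) τ (right_mem_Icc.2 hτ.1) hτ.1
    nlinarith [mul_nonneg hc.le (sub_nonneg.2 hτ.1)]
  have hrτ : R ≤ r τ := hgood ⟨hτ.1, le_rfl⟩
  have hnear : ∀ᶠ x in 𝓝 τ, 0 < deriv (deriv f) x ∧ 0 < r x :=
    (hf₃.continuousAt.eventually_const_lt (by linarith [hconv τ hτ.1 hrτ])).and
      (hr.continuous.continuousAt.eventually_const_lt (by linarith))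
  obtain ⟨l, u, ⟨hl, hu⟩, hsub⟩ := mem_nhds_iff_exists_Ioo_subset.1 hnear
  refine mem_nhdsGT_iff_exists_Ioo_subset.2 ⟨u, hu, fun x hx => ?_⟩
  have hfx := add_deriv_mul_add_sq_le_of_le_deriv_deriv hf₁ hf₂ (c := 0)
    (fun y hy => (hsub ⟨hl.trans hy.1, hy.2.trans hx.2⟩).1.le) (right_mem_Icc.2 hx.1.le)
  have hrx : 0 < r x := (hsub ⟨hl.trans hx.1, hx.2⟩).2
  have hsq : R ^ 2 ≤ r x ^ 2 := by
    nlinarith [mul_nonneg hderτ (sub_nonneg.2 hx.1.le), pow_le_pow_left₀ hR.le hrτ 2]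
  exact (pow_le_pow_iff_left₀ hR.le hrx.le two_ne_zero).1 hsq

theorem exists_mul_sqrt_one_add_sq_le {r : ℝ → ℝ} {t₀ a c : ℝ} (ha : 0 < a) (hc : 0 < c)
    (hr : ∀ t, t₀ ≤ t → 0 ≤ r t) (hsq : ∀ t, t₀ ≤ t → a + c * (t - t₀) ^ 2 ≤ r t ^ 2) :
    ∃ c₁ > (0:ℝ), ∃ T : ℝ, ∀ t, T ≤ t → c₁ * Real.sqrt (1 + t ^ 2) ≤ r t := by
  set m := min a (c / 4)
  have hm : 0 < m := lt_min ha (by linarith)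
  refine ⟨Real.sqrt m, Real.sqrt_pos.2 hm, 2 * |t₀|, fun t ht => ?_⟩
  have ht₀ : t₀ ≤ t := by linarith [le_abs_self t₀, abs_nonneg t₀]
  -- `T = 2 |t₀|` makes `t - t₀ ≥ t / 2`
  have hshift : t ^ 2 / 4 ≤ (t - t₀) ^ 2 := by nlinarith [le_abs_self t₀, abs_nonneg t₀]
  have hbound : m * (1 + t ^ 2) ≤ r t ^ 2 := by
    nlinarith [min_le_left a (c / 4), min_le_right a (c / 4), hsq t ht₀, sq_nonneg t]
  calc Real.sqrt m * Real.sqrt (1 + t ^ 2) = Real.sqrt (m * (1 + t ^ 2)) :=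
        (Real.sqrt_mul hm.le _).symm
    _ ≤ Real.sqrt (r t ^ 2) := Real.sqrt_le_sqrt hbound
    _ = r t := Real.sqrt_sq (hr t ht₀)

/-- Virial-type convexity argument: if `r(t₀) ≥ R > 0`, `(r²)'(t₀) ≥ 0`, and
`(r²)'' ≥ c > 0` whenever `r ≥ R`, then `r(t)² ≥ R² + c(t−t₀)²/2` for `t ≥ t₀`;
in particular `r(t) ≥ c₁⟨t⟩` for large `t` and some `c₁ > 0`. -/
theorem virial_quadratic_growth
    (r : ℝ → ℝ) (hr : ContDiff ℝ 2 r)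
    (t₀ R c : ℝ) (hR : 0 < R) (hc : 0 < c)
    (hinit : R ≤ r t₀)
    (hconv : ∀ t, t₀ ≤ t → R ≤ r t → c ≤ deriv (deriv (fun s => (r s) ^ 2)) t)
    (hder0 : 0 ≤ deriv (fun s => (r s) ^ 2) t₀) :
    (∀ t, t₀ ≤ t → R ^ 2 + c * (t - t₀) ^ 2 / 2 ≤ (r t) ^ 2) ∧
    ∃ c₁ > (0:ℝ), ∃ T : ℝ, ∀ t, T ≤ t → c₁ * Real.sqrt (1 + t ^ 2) ≤ r t := by
  have hge : ∀ t, t₀ ≤ t → R ≤ r t := fun t ht =>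
    le_of_le_deriv_deriv_sq hr hR hc hinit hconv hder0 ht
  have hf : ContDiff ℝ 2 (fun s => r s ^ 2) := hr.pow 2
  have hquad : ∀ t, t₀ ≤ t → R ^ 2 + c * (t - t₀) ^ 2 / 2 ≤ r t ^ 2 := fun t ht => by
    have := add_deriv_mul_add_sq_le_of_le_deriv_deriv (hf.differentiable two_ne_zero)
      hf.differentiable_deriv_two (fun x hx => hconv x hx.1.le (hge x hx.1.le))
      (right_mem_Icc.2 ht)
    nlinarith [mul_nonneg hder0 (sub_nonneg.2 ht), pow_le_pow_left₀ hR.le hinit 2]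
  refine ⟨hquad, exists_mul_sqrt_one_add_sq_le (pow_pos hR 2) (half_pos hc)
    (fun t ht => hR.le.trans (hge t ht)) (fun t ht => by linarith [hquad t ht])⟩
end
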